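/- For symmetric matrices A, B satisfying the block inequality diag(A, -B) ≤ 3ε [[I, -I], [-I, I]], and any positive semidefinite matrix ΛΛ', one has tr(ΛΛ'A - ΛΛ'B) ≤ 0. -/

import Mathlib

/-!
Testing the block inequality on vectors `(u, u)`, i.e. conjugating it by the stacked matrix
`[I; I]`, annihilates the penalty block `[[I, -I], [-I, I]]` and leaves `B - A ⪰ 0`;
hence `tr(ΛΛᵀ(B - A)) = tr(Λᵀ(B - A)Λ) ≥ 0`.
-/

open Matrix

namespace Matrix

variable {l m n α : Type*}

theorem conjTranspose_fromRows_mul_fromBlocks_mul_fromRows [Fintype m] [Fintype n]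
    [Semiring α] [StarRing α] (X : Matrix m l α) (Y : Matrix n l α) (P : Matrix m m α)
    (Q : Matrix m n α) (R : Matrix n m α) (S : Matrix n n α) :
    (fromRows X Y)ᴴ * fromBlocks P Q R S * fromRows X Y =
      Xᴴ * P * X + Xᴴ * Q * Y + (Yᴴ * R * X + Yᴴ * S * Y) := by
  simp only [conjTranspose_fromRows_eq_fromCols_conjTranspose, Matrix.mul_assoc,
    fromBlocks_mul_fromRows, fromCols_mul_fromRows, Matrix.mul_add]

variable [Fintype m] [Fintype n] [CommRing α] [PartialOrder α] [StarRing α]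

theorem PosSemidef.sub_of_smul_fromBlocks_one_neg_one_sub [DecidableEq n] {c : α}
    {A B : Matrix n n α}
    (h : (c • fromBlocks 1 (-1) (-1) 1 - fromBlocks A 0 0 (-B)).PosSemidef) :
    (B - A).PosSemidef := by
  have := h.conjTranspose_mul_mul_same (fromRows (1 : Matrix n n α) 1)
  simp only [Matrix.mul_sub, Matrix.sub_mul, Matrix.mul_smul, Matrix.smul_mul,
    conjTranspose_fromRows_mul_fromBlocks_mul_fromRows] at this
  simpa [sub_eq_add_neg] using this

theorem PosSemidef.trace_mul_conjTranspose_mul_nonneg [StarOrderedRing α] {C : Matrix n n α}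
    (hC : C.PosSemidef) (Λ : Matrix n m α) : 0 ≤ (Λ * Λᴴ * C).trace := by
  rw [Matrix.mul_assoc, trace_mul_comm]
  exact (hC.conjTranspose_mul_mul_same Λ).trace_nonneg

end Matrix

theorem trace_ishii_estimate_general {n M : ℕ}
    (Λ : Matrix (Fin n) (Fin M) ℝ) (ε : ℝ)
    (A B : Matrix (Fin n) (Fin n) ℝ)
    (hblock : ((3 * ε) • Matrix.fromBlocks (1 : Matrix (Fin n) (Fin n) ℝ) (-1) (-1) 1
        - Matrix.fromBlocks A 0 0 (-B)).PosSemidef) :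
    (Λ * Λ.transpose * A).trace - (Λ * Λ.transpose * B).trace ≤ 0 := by
  have hBA := hblock.sub_of_smul_fromBlocks_one_neg_one_sub
  have htrace := hBA.trace_mul_conjTranspose_mul_nonneg Λ
  rw [conjTranspose_eq_transpose_of_trivial, Matrix.mul_sub, trace_sub] at htrace
  linarith

theorem trace_ishii_estimate {n M : ℕ}
    (Λ : Matrix (Fin n) (Fin M) ℝ) (ε : ℝ) (hε : 0 < ε)
    (A B : Matrix (Fin n) (Fin n) ℝ) (hA : A.IsSymm) (hB : B.IsSymm)
    (hblock : ((3 * ε) • Matrix.fromBlocks (1 : Matrix (Fin n) (Fin n) ℝ) (-1) (-1) 1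
        - Matrix.fromBlocks A 0 0 (-B)).PosSemidef) :
    (Λ * Λ.transpose * A).trace - (Λ * Λ.transpose * B).trace ≤ 0 :=
  trace_ishii_estimate_general Λ ε A B hblock
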